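/- Let n ≥ 2 be an integer, γ > 1, ε > 0, C0 > 0, and let α := ( −(n−1) + √( (n−1)² + 4( n−2 + 2/γ ) ) ) / 2. Let h : [0,1] → ℝ be continuous on [0,1], twice continuously differentiable on (0,1), nondecreasing, with Lh = 0 on (0,1), h(0) = 0, h(1) = 1, and r ≤ h(r) ≤ r^α for all r ∈ (0,1). Let A ∈ C¹([0,1)) and B ∈ C([0,1)) satisfy |A(r)| ≤ C0·r and |B(r)| ≤ C0 for all r ∈ (0,1), and set H := A' + B on (0,1). Then the function g(r) := h(r) · ∫_0^r [ ( h(s)² s^{n−2} (ε + s²) )^{−1} · ∫_0^s h(τ) τ^{n−2} (ε + τ²) H(τ) dτ ] ds is well defined and twice continuously differentiable on (0,1), satisfies Lg = H on (0,1), and satisfies |g(r)| ≤ C·C0·r^{1+α} for all r ∈ (0,1), where C > 0 depends only on n and γ (in particular C is independent of ε). -/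

import Mathlib

/-
Write `w(s) = s^(n-2) (ε + s²)`. Since `w'/w = (n-2)/s + 2s/(ε+s²)`, we have
`L u = w⁻¹ (w u')' - q u` with `q` the zeroth-order coefficient, and for `g = h G` with `L h = 0`
the equation `L g = H` becomes `(h² w G')' = h w H`, which the double integral solves.
For the bound, integrate by parts in the inner integral: `h w` is nondecreasing and vanishes at `0`,
so `|∫₀ˢ h w (A' + B)| ≤ 3 C₀ s h(s) w(s)`. As `h(s) ≥ s`, this gives `|G'| ≤ 3 C₀`, hence
`|g(r)| ≤ 3 C₀ r h(r) ≤ 3 C₀ r^(1+α)`.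
-/

open Set Filter

noncomputable section

/-- The ODE operator `L`:
`(L h)(r) = h'' + ((n-2)/r + 2r/(ε+r²)) h' - ((n-2)/r² + 2/(γ(ε+r²))) h`. -/
def Lop (n : ℕ) (γ ε : ℝ) (h : ℝ → ℝ) (r : ℝ) : ℝ :=
  deriv (deriv h) r + (((n:ℝ) - 2)/r + 2*r/(ε + r^2)) * deriv h r
    - (((n:ℝ) - 2)/r^2 + 2/(γ*(ε + r^2))) * h r

/-- `α := (-(n-1) + √((n-1)² + 4(n-2 + 2/γ)))/2`. -/
def alphaN (n : ℕ) (γ : ℝ) : ℝ :=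
  (-((n:ℝ) - 1) + Real.sqrt (((n:ℝ)-1)^2 + 4*((n:ℝ) - 2 + 2/γ)))/2

/-- `h` is a normalized solution of `Lh = 0` on `(0,1)`: continuous on `[0,1]`,
twice continuously differentiable on `(0,1)`, with `h(0) = 0` and `h(1) = 1`. -/
def IsODESol (n : ℕ) (γ ε : ℝ) (h : ℝ → ℝ) : Prop :=
  ContinuousOn h (Icc (0:ℝ) 1) ∧ (∀ r ∈ Ioo (0:ℝ) 1, ContDiffAt ℝ 2 h r) ∧
    (∀ r ∈ Ioo (0:ℝ) 1, Lop n γ ε h r = 0) ∧ h 0 = 0 ∧ h 1 = 1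

/-- The variation-of-parameters solution
`g(r) := h(r) ∫₀^r (h(s)² s^{n-2} (ε+s²))⁻¹ ∫₀^s h(τ) τ^{n-2} (ε+τ²) H(τ) dτ ds`. -/
def vparam (n : ℕ) (ε : ℝ) (h H : ℝ → ℝ) (r : ℝ) : ℝ :=
  h r * ∫ s in (0:ℝ)..r, ((h s)^2 * s^(n-2) * (ε + s^2))⁻¹ *
    ∫ τ in (0:ℝ)..s, h τ * τ^(n-2) * (ε + τ^2) * H τ

open MeasureTheory intervalIntegral Topology

theorem MonotoneOn.deriv_nonneg_of_mem_Ioo {u : ℝ → ℝ} {a b x : ℝ} (hu : MonotoneOn u (Icc a b))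
    (hx : x ∈ Ioo a b) : 0 ≤ deriv u x :=
  hu.derivWithin_nonneg.trans_eq (derivWithin_of_mem_nhds (Icc_mem_nhds hx.1 hx.2))

theorem hasDerivAt_integral_of_continuousOn {f : ℝ → ℝ} {U : Set ℝ} {a x : ℝ} (hU : IsOpen U)
    (hint : IntervalIntegrable f volume a x) (hf : ContinuousOn f U) (hx : x ∈ U) :
    HasDerivAt (fun t => ∫ τ in a..t, f τ) (f x) x :=
  integral_hasDerivAt_right hint (hf.stronglyMeasurableAtFilter hU x hx)
    (hf.continuousAt (hU.mem_nhds hx))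

theorem contDiffOn_integral_of_contDiffOn {f : ℝ → ℝ} {U : Set ℝ} {a : ℝ} {k : ℕ} (hU : IsOpen U)
    (hint : ∀ x ∈ U, IntervalIntegrable f volume a x) (hf : ContDiffOn ℝ k f U) :
    ContDiffOn ℝ (k + 1) (fun t => ∫ τ in a..t, f τ) U := by
  have hderiv x (hx : x ∈ U) :=
    hasDerivAt_integral_of_continuousOn hU (hint x hx) hf.continuousOn hx
  refine (contDiffOn_succ_iff_deriv_of_isOpen hU).2
    ⟨fun x hx => (hderiv x hx).differentiableAt.differentiableWithinAt, by simp, ?_⟩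
  exact hf.congr fun x hx => (hderiv x hx).deriv

theorem intervalIntegrable_of_continuousOn_Ioo_of_abs_le {f : ℝ → ℝ} {a b C : ℝ} (hab : a ≤ b)
    (hf : ContinuousOn f (Ioo a b)) (hC : ∀ x ∈ Ioo a b, |f x| ≤ C) :
    IntervalIntegrable f volume a b :=
  (intervalIntegrable_iff_integrableOn_Ioo_of_le hab).2 <|
    IntegrableOn.of_bound measure_Ioo_lt_top (hf.aestronglyMeasurable measurableSet_Ioo) C
      ((ae_restrict_iff' measurableSet_Ioo).2 (.of_forall hC))

theorem abs_integral_mul_deriv_le {u v v' : ℝ → ℝ} {a b M : ℝ} (hab : a ≤ b)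
    (hu : ContinuousOn u (Icc a b)) (hud : ∀ x ∈ Ioo a b, DifferentiableAt ℝ u x)
    (hum : MonotoneOn u (Icc a b)) (hua : u a = 0) (hv : ContinuousOn v (Icc a b))
    (hvv' : ∀ x ∈ Ioo a b, HasDerivAt v (v' x) x) (hv' : IntervalIntegrable v' volume a b)
    (hvM : ∀ x ∈ Ioc a b, |v x| ≤ M) :
    |∫ x in a..b, u x * v' x| ≤ 2 * M * u b := by
  rcases hab.eq_or_lt with rfl | hlt
  · simp [hua]
  have hub : 0 ≤ u b := hua ▸ hum (left_mem_Icc.2 hab) (right_mem_Icc.2 hab) hab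
  have hu'_nonneg x (hx : x ∈ Ioo a b) : 0 ≤ deriv u x := hum.deriv_nonneg_of_mem_Ioo hx
  have hmin : min a b = a := min_eq_left hab
  have hmax : max a b = b := max_eq_right hab
  have hu' : IntervalIntegrable (deriv u) volume a b :=
    intervalIntegrable_deriv_of_nonneg (g := u) (by rwa [uIcc_of_le hab])
      (by rw [hmin, hmax]; exact fun x hx => (hud x hx).hasDerivAt)
      (by rw [hmin, hmax]; exact hu'_nonneg)
  have hftc : ∫ x in a..b, deriv u x = u b := by
    rw [integral_eq_sub_of_hasDerivAt_of_le hab hu (fun x hx => (hud x hx).hasDerivAt) hu', hua,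
      sub_zero]
  have hboundary : |u b * v b| ≤ M * u b := by
    rw [abs_mul, abs_of_nonneg hub, mul_comm]
    exact mul_le_mul_of_nonneg_right (hvM b ⟨hlt, le_rfl⟩) hub
  have hremainder : |∫ x in a..b, deriv u x * v x| ≤ M * u b := by
    calc |∫ x in a..b, deriv u x * v x| ≤ ∫ x in a..b, deriv u x * M := by
          rw [← Real.norm_eq_abs]
          refine norm_integral_le_of_norm_le hab ?_ (hu'.mul_const M)
          filter_upwards [volume.ae_ne b] with x hxb hx
          rw [Real.norm_eq_abs, abs_mul, abs_of_nonneg (hu'_nonneg x ⟨hx.1, hx.2.lt_of_ne hxb⟩)]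
          exact mul_le_mul_of_nonneg_left (hvM x hx) (hu'_nonneg x ⟨hx.1, hx.2.lt_of_ne hxb⟩)
      _ = M * u b := by rw [intervalIntegral.integral_mul_const, hftc, mul_comm]
  rw [integral_mul_deriv_eq_deriv_mul_of_hasDerivAt (by rwa [uIcc_of_le hab])
    (by rwa [uIcc_of_le hab]) (by rw [hmin, hmax]; exact fun x hx => (hud x hx).hasDerivAt)
    (by rw [hmin, hmax]; exact hvv') hu' hv', hua, zero_mul, sub_zero]
  linarith [abs_sub (u b * v b) (∫ x in a..b, deriv u x * v x)]

theorem abs_integral_mul_le_of_monotoneOn {u B : ℝ → ℝ} {a b K : ℝ} (hab : a ≤ b)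
    (hum : MonotoneOn u (Icc a b)) (hua : 0 ≤ u a) (hBK : ∀ x ∈ Ioc a b, |B x| ≤ K) :
    |∫ x in a..b, u x * B x| ≤ K * (b - a) * u b := by
  have hbound : ∀ x ∈ uIoc a b, ‖u x * B x‖ ≤ u b * K := by
    intro x hx
    rw [uIoc_of_le hab] at hx
    have hux : u x ≤ u b := hum (Ioc_subset_Icc_self hx) (right_mem_Icc.2 hab) hx.2
    have hux0 : 0 ≤ u x := hua.trans (hum (left_mem_Icc.2 hab) (Ioc_subset_Icc_self hx) hx.1.le)
    rw [Real.norm_eq_abs, abs_mul, abs_of_nonneg hux0]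
    exact mul_le_mul hux (hBK x hx) (abs_nonneg _) (hux0.trans hux)
  have := norm_integral_le_of_norm_le_const hbound
  rw [Real.norm_eq_abs, abs_of_nonneg (sub_nonneg.2 hab)] at this
  linarith

def weight (n : ℕ) (ε s : ℝ) : ℝ := s ^ (n - 2) * (ε + s ^ 2)

section Weight

variable {n : ℕ} {ε s : ℝ}

theorem weight_nonneg (hε : 0 ≤ ε) (hs : 0 ≤ s) : 0 ≤ weight n ε s := by
  unfold weight; positivity

theorem weight_pos (hε : 0 ≤ ε) (hs : 0 < s) : 0 < weight n ε s := by
  unfold weight; positivity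

theorem monotoneOn_weight (hε : 0 ≤ ε) : MonotoneOn (weight n ε) (Ici 0) :=
  fun x hx _ _ hxy => mul_le_mul (pow_le_pow_left₀ hx hxy _) (by gcongr) (by positivity)
    (pow_nonneg (le_trans hx hxy) _)

theorem contDiff_weight {k : WithTop ℕ∞} : ContDiff ℝ k (weight n ε) := by
  unfold weight; fun_prop

theorem continuous_weight : Continuous (weight n ε) := by
  unfold weight; fun_prop

theorem differentiable_weight : Differentiable ℝ (weight n ε) := by
  unfold weight; fun_prop

theorem hasDerivAt_weight (hn : 2 ≤ n) (hε : 0 ≤ ε) (hs : 0 < s) :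
    HasDerivAt (weight n ε) ((((n : ℝ) - 2) / s + 2 * s / (ε + s ^ 2)) * weight n ε s) s := by
  obtain ⟨k, rfl⟩ := Nat.exists_eq_add_of_le' hn
  have hw : weight (k + 2) ε = fun x => x ^ k * (ε + x ^ 2) := by
    funext x; simp [weight]
  have hpow : (k : ℝ) * s ^ (k - 1) = k / s * s ^ k := by
    rcases k with _ | k
    · simp
    · field_simp; simp [pow_succ]
  rw [hw]
  refine ((hasDerivAt_pow k s).mul ((hasDerivAt_pow 2 s).const_add ε)).congr_deriv ?_
  rw [hpow]
  push_cast
  field_simp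
  ring

end Weight

theorem Lop_mul {n : ℕ} {γ ε r : ℝ} {h G : ℝ → ℝ} (hh : ContDiffAt ℝ 2 h r)
    (hG : ContDiffAt ℝ 2 G r) :
    Lop n γ ε (fun x => h x * G x) r = G r * Lop n γ ε h r + h r * deriv (deriv G) r
      + (2 * deriv h r + (((n : ℝ) - 2) / r + 2 * r / (ε + r ^ 2)) * h r) * deriv G r := by
  have hderiv : deriv (fun x => h x * G x) =ᶠ[𝓝 r] fun x => deriv h x * G x + h x * deriv G x := by
    filter_upwards [hh.eventually (by simp), hG.eventually (by simp)] with x hhx hGx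
    exact ((hhx.differentiableAt two_ne_zero).hasDerivAt.mul
      (hGx.differentiableAt two_ne_zero).hasDerivAt).deriv
  have hh' := ((hh.derivWithin (m := 1) le_rfl).differentiableAt one_ne_zero).hasDerivAt
  have hG' := ((hG.derivWithin (m := 1) le_rfl).differentiableAt one_ne_zero).hasDerivAt
  have hh₁ := (hh.differentiableAt two_ne_zero).hasDerivAt
  have hG₁ := (hG.differentiableAt two_ne_zero).hasDerivAt
  have hsecond : deriv (fun x => deriv h x * G x + h x * deriv G x) r
      = deriv (deriv h) r * G r + deriv h r * deriv G r
        + (deriv h r * deriv G r + h r * deriv (deriv G) r) :=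
    ((hh'.mul hG₁).add (hh₁.mul hG')).deriv
  rw [Lop, Lop, hderiv.deriv_eq, hsecond, hderiv.eq_of_nhds]
  ring

-- With `w' = p w` and `I' = h w H`, this is the equation that `Lop_mul` leaves for
-- `G' = I / (h² w)` once `L h = 0`.
theorem mul_deriv_add_eq_of_hasDerivAt {h w I : ℝ → ℝ} {r h' p H : ℝ} (hh : HasDerivAt h h' r)
    (hw : HasDerivAt w (p * w r) r) (hI : HasDerivAt I (h r * w r * H) r) (hr : h r ≠ 0)
    (hwr : w r ≠ 0) :
    h r * deriv (fun x => (h x ^ 2 * w x)⁻¹ * I x) r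
      + (2 * h' + p * h r) * ((h r ^ 2 * w r)⁻¹ * I r) = H := by
  have hW : h r ^ 2 * w r ≠ 0 := mul_ne_zero (pow_ne_zero 2 hr) hwr
  have hf : HasDerivAt (fun x => (h x ^ 2 * w x)⁻¹ * I x) _ r :=
    (((hh.pow 2).mul hw).inv hW).mul hI
  rw [hf.deriv]
  simp only [Pi.mul_apply, Pi.pow_apply, Pi.inv_apply]
  field_simp
  ring

-- Writing `vparam = h G`, these are `h² w G'` and `G'`.
def vparamInner (n : ℕ) (ε : ℝ) (h H : ℝ → ℝ) (s : ℝ) : ℝ :=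
  ∫ τ in (0 : ℝ)..s, h τ * weight n ε τ * H τ

def vparamDeriv (n : ℕ) (ε : ℝ) (h H : ℝ → ℝ) (s : ℝ) : ℝ :=
  (h s ^ 2 * weight n ε s)⁻¹ * vparamInner n ε h H s

section VariationOfParameters

variable {n : ℕ} {ε : ℝ} {h H : ℝ → ℝ}

theorem vparam_eq_mul_integral_vparamDeriv :
    vparam n ε h H = fun r => h r * ∫ s in (0 : ℝ)..r, vparamDeriv n ε h H s := by
  funext r
  simp only [vparam, vparamDeriv, vparamInner, weight, mul_assoc]

theorem continuousOn_mul_weight_mul (hh : ContinuousOn h (Icc 0 1))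
    (hH : ContinuousOn H (Ico 0 1)) :
    ContinuousOn (fun τ => h τ * weight n ε τ * H τ) (Ico 0 1) :=
  ((hh.mono Ico_subset_Icc_self).mul continuous_weight.continuousOn).mul hH

theorem intervalIntegrable_mul_weight_mul {s : ℝ} (hh : ContinuousOn h (Icc 0 1))
    (hH : ContinuousOn H (Ico 0 1)) (hs : s ∈ Ico (0 : ℝ) 1) :
    IntervalIntegrable (fun τ => h τ * weight n ε τ * H τ) volume 0 s :=
  ((continuousOn_mul_weight_mul hh hH).mono (Icc_subset_Ico_right hs.2)).intervalIntegrable_of_Icc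
    hs.1

theorem hasDerivAt_vparamInner {s : ℝ} (hh : ContinuousOn h (Icc 0 1))
    (hH : ContinuousOn H (Ico 0 1)) (hs : s ∈ Ioo (0 : ℝ) 1) :
    HasDerivAt (vparamInner n ε h H) (h s * weight n ε s * H s) s :=
  hasDerivAt_integral_of_continuousOn isOpen_Ioo
    (intervalIntegrable_mul_weight_mul hh hH (Ioo_subset_Ico_self hs))
    ((continuousOn_mul_weight_mul hh hH).mono Ioo_subset_Ico_self) hs

theorem contDiffOn_vparamDeriv (hε : 0 ≤ ε) (hh : ContinuousOn h (Icc 0 1))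
    (hh₁ : ContDiffOn ℝ 1 h (Ioo 0 1)) (hpos : ∀ x ∈ Ioo (0 : ℝ) 1, 0 < h x)
    (hH : ContinuousOn H (Ico 0 1)) :
    ContDiffOn ℝ 1 (vparamDeriv n ε h H) (Ioo 0 1) := by
  have hinv : ContDiffOn ℝ 1 (fun s => (h s ^ 2 * weight n ε s)⁻¹) (Ioo 0 1) :=
    ((hh₁.pow 2).mul contDiff_weight.contDiffOn).inv fun x hx =>
      (mul_pos (pow_pos (hpos x hx) 2) (weight_pos hε hx.1)).ne'
  have hinner := contDiffOn_integral_of_contDiffOn (k := 0) isOpen_Ioo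
    (fun x hx => intervalIntegrable_mul_weight_mul (n := n) (ε := ε) hh hH (Ioo_subset_Ico_self hx))
    (contDiffOn_zero.2 ((continuousOn_mul_weight_mul hh hH).mono Ioo_subset_Ico_self))
  rw [Nat.cast_zero, zero_add] at hinner
  exact hinv.mul hinner

theorem contDiffOn_integral_vparamDeriv (hε : 0 ≤ ε) (hh : ContinuousOn h (Icc 0 1))
    (hh₁ : ContDiffOn ℝ 1 h (Ioo 0 1)) (hpos : ∀ x ∈ Ioo (0 : ℝ) 1, 0 < h x)
    (hH : ContinuousOn H (Ico 0 1))
    (hint : ∀ r ∈ Ioo (0 : ℝ) 1, IntervalIntegrable (vparamDeriv n ε h H) volume 0 r) :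
    ContDiffOn ℝ 2 (fun r => ∫ s in (0 : ℝ)..r, vparamDeriv n ε h H s) (Ioo 0 1) := by
  have := contDiffOn_integral_of_contDiffOn (k := 1) isOpen_Ioo hint
    (contDiffOn_vparamDeriv hε hh hh₁ hpos hH)
  norm_num at this
  exact this

theorem contDiffOn_vparam (hε : 0 ≤ ε) (hh : ContinuousOn h (Icc 0 1))
    (hh₂ : ContDiffOn ℝ 2 h (Ioo 0 1)) (hpos : ∀ x ∈ Ioo (0 : ℝ) 1, 0 < h x)
    (hH : ContinuousOn H (Ico 0 1))
    (hint : ∀ r ∈ Ioo (0 : ℝ) 1, IntervalIntegrable (vparamDeriv n ε h H) volume 0 r) :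
    ContDiffOn ℝ 2 (vparam n ε h H) (Ioo 0 1) := by
  rw [vparam_eq_mul_integral_vparamDeriv]
  exact hh₂.mul (contDiffOn_integral_vparamDeriv hε hh (hh₂.of_le one_le_two) hpos hH hint)

theorem Lop_vparam {γ r : ℝ} (hn : 2 ≤ n) (hε : 0 ≤ ε) (hh : ContinuousOn h (Icc 0 1))
    (hh₂ : ContDiffOn ℝ 2 h (Ioo 0 1)) (hpos : ∀ x ∈ Ioo (0 : ℝ) 1, 0 < h x)
    (hH : ContinuousOn H (Ico 0 1))
    (hint : ∀ r ∈ Ioo (0 : ℝ) 1, IntervalIntegrable (vparamDeriv n ε h H) volume 0 r)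
    (hLh : Lop n γ ε h r = 0) (hr : r ∈ Ioo (0 : ℝ) 1) :
    Lop n γ ε (vparam n ε h H) r = H r := by
  have hr_nhds : Ioo (0 : ℝ) 1 ∈ 𝓝 r := Ioo_mem_nhds hr.1 hr.2
  have hf := (contDiffOn_vparamDeriv (n := n) hε hh (hh₂.of_le one_le_two) hpos hH).continuousOn
  have hG : deriv (fun r => ∫ s in (0 : ℝ)..r, vparamDeriv n ε h H s) =ᶠ[𝓝 r]
      vparamDeriv n ε h H := eventually_of_mem hr_nhds fun x hx =>
    (hasDerivAt_integral_of_continuousOn isOpen_Ioo (hint x hx) hf hx).deriv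
  rw [vparam_eq_mul_integral_vparamDeriv, Lop_mul (hh₂.contDiffAt hr_nhds)
    ((contDiffOn_integral_vparamDeriv hε hh (hh₂.of_le one_le_two) hpos hH hint).contDiffAt
      hr_nhds), hLh, mul_zero, zero_add, hG.deriv_eq, hG.eq_of_nhds]
  exact mul_deriv_add_eq_of_hasDerivAt
    ((hh₂.contDiffAt hr_nhds).differentiableAt two_ne_zero).hasDerivAt
    (hasDerivAt_weight hn hε hr.1) (hasDerivAt_vparamInner hh hH hr) (hpos r hr).ne'
    (weight_pos hε hr.1).ne'

theorem abs_vparamInner_le {A B : ℝ → ℝ} {C0 s : ℝ} (hε : 0 ≤ ε) (hh : ContinuousOn h (Icc 0 1))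
    (hhd : ∀ x ∈ Ioo (0 : ℝ) 1, DifferentiableAt ℝ h x) (hmono : MonotoneOn h (Icc 0 1))
    (h0 : h 0 = 0) (hA : ContinuousOn A (Ico 0 1))
    (hAd : ∀ x ∈ Ioo (0 : ℝ) 1, DifferentiableAt ℝ A x) (hA' : ContinuousOn (deriv A) (Ico 0 1))
    (hB : ContinuousOn B (Ico 0 1)) (hAb : ∀ x ∈ Ioo (0 : ℝ) 1, |A x| ≤ C0 * x)
    (hBb : ∀ x ∈ Ioo (0 : ℝ) 1, |B x| ≤ C0) (hs : s ∈ Ioo (0 : ℝ) 1) :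
    |vparamInner n ε h (fun t => deriv A t + B t) s| ≤ 3 * C0 * s * (h s * weight n ε s) := by
  set u : ℝ → ℝ := fun x => h x * weight n ε x
  have hIcc : Icc 0 s ⊆ Icc (0 : ℝ) 1 := Icc_subset_Icc_right hs.2.le
  have hIco : Icc 0 s ⊆ Ico (0 : ℝ) 1 := fun x hx => ⟨hx.1, hx.2.trans_lt hs.2⟩
  have hIoc : Ioc 0 s ⊆ Ioo (0 : ℝ) 1 := fun x hx => ⟨hx.1, hx.2.trans_lt hs.2⟩
  have hC0 : 0 ≤ C0 := (abs_nonneg _).trans (hBb s hs)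
  have hu : ContinuousOn u (Icc 0 s) :=
    (hh.mono hIcc).mul continuous_weight.continuousOn
  have hum : MonotoneOn u (Icc 0 s) :=
    (hmono.mono hIcc).mul ((monotoneOn_weight hε).mono fun x hx => hx.1)
      (fun x hx => h0 ▸ hmono (left_mem_Icc.2 zero_le_one) (hIcc hx) hx.1)
      (fun x hx => weight_nonneg hε hx.1)
  have hu0 : u 0 = 0 := by simp [u, h0]
  have hparts := abs_integral_mul_deriv_le hs.1.le hu
    (fun x hx => (hhd x (hIoc (Ioo_subset_Ioc_self hx))).mul
      (differentiable_weight x)) hum hu0 (hA.mono hIco)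
    (fun x hx => (hAd x (hIoc (Ioo_subset_Ioc_self hx))).hasDerivAt)
    ((hA'.mono hIco).intervalIntegrable_of_Icc hs.1.le) (M := C0 * s)
    (fun x hx => (hAb x (hIoc hx)).trans (mul_le_mul_of_nonneg_left hx.2 hC0))
  have hrest := abs_integral_mul_le_of_monotoneOn hs.1.le hum hu0.ge fun x hx => hBb x (hIoc hx)
  have hsplit : vparamInner n ε h (fun t => deriv A t + B t) s
      = (∫ x in (0 : ℝ)..s, u x * deriv A x) + ∫ x in (0 : ℝ)..s, u x * B x := by
    simp only [vparamInner, mul_add]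
    exact integral_add ((hu.mul (hA'.mono hIco)).intervalIntegrable_of_Icc hs.1.le)
      ((hu.mul (hB.mono hIco)).intervalIntegrable_of_Icc hs.1.le)
  rw [hsplit]
  calc _ ≤ |∫ x in (0 : ℝ)..s, u x * deriv A x| + |∫ x in (0 : ℝ)..s, u x * B x| := abs_add_le _ _
    _ ≤ 2 * (C0 * s) * u s + C0 * (s - 0) * u s := add_le_add hparts hrest
    _ = 3 * C0 * s * (h s * weight n ε s) := by ring

theorem abs_vparamDeriv_le {c s : ℝ} (hε : 0 ≤ ε) (hs : 0 < s) (hhs : s ≤ h s)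
    (hI : |vparamInner n ε h H s| ≤ c * s * (h s * weight n ε s)) :
    |vparamDeriv n ε h H s| ≤ c := by
  have hw := weight_pos (n := n) hε hs
  have hpos := hs.trans_le hhs
  have hc : 0 ≤ c := nonneg_of_mul_nonneg_left (b := s * (h s * weight n ε s))
    (by rw [← mul_assoc]; exact (abs_nonneg _).trans hI) (by positivity)
  rw [vparamDeriv, abs_mul, abs_inv, abs_of_pos (by positivity), inv_mul_le_iff₀ (by positivity)]
  calc _ ≤ c * s * (h s * weight n ε s) := hI
    _ ≤ c * h s * (h s * weight n ε s) := by gcongr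
    _ = h s ^ 2 * weight n ε s * c := by ring

theorem abs_vparam_le {c r : ℝ} (hr : 0 ≤ r)
    (hbound : ∀ s ∈ Ioc 0 r, |vparamDeriv n ε h H s| ≤ c) :
    |vparam n ε h H r| ≤ c * r * |h r| := by
  have hG := norm_integral_le_of_norm_le_const (a := 0) (b := r) (f := vparamDeriv n ε h H)
    fun x hx => (Real.norm_eq_abs _).trans_le (hbound x (uIoc_of_le hr ▸ hx))
  rw [Real.norm_eq_abs, sub_zero, abs_of_nonneg hr] at hG
  rw [vparam_eq_mul_integral_vparamDeriv, abs_mul, mul_comm]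
  exact mul_le_mul_of_nonneg_right hG (abs_nonneg _)

end VariationOfParameters

theorem variation_of_parameters_general (n : ℕ) (hn : 2 ≤ n) (γ : ℝ) :
    ∃ C : ℝ, 0 < C ∧
      ∀ ε : ℝ, 0 < ε → ∀ C0 : ℝ, 0 < C0 →
      ∀ h : ℝ → ℝ, IsODESol n γ ε h → MonotoneOn h (Icc (0:ℝ) 1) →
      (∀ r ∈ Ioo (0:ℝ) 1, r ≤ h r ∧ h r ≤ r ^ alphaN n γ) →
      ∀ A B : ℝ → ℝ,
      ContinuousOn A (Ico (0:ℝ) 1) →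
      (∀ r ∈ Ioo (0:ℝ) 1, DifferentiableAt ℝ A r) →
      ContinuousOn (deriv A) (Ico (0:ℝ) 1) →
      ContinuousOn B (Ico (0:ℝ) 1) →
      (∀ r ∈ Ioo (0:ℝ) 1, |A r| ≤ C0 * r) →
      (∀ r ∈ Ioo (0:ℝ) 1, |B r| ≤ C0) →
      -- well-definedness of the iterated integrals
      (∀ s ∈ Ioo (0:ℝ) 1, IntervalIntegrable
          (fun τ => h τ * τ^(n-2) * (ε + τ^2) * (deriv A τ + B τ)) MeasureTheory.volume 0 s) ∧
      (∀ r ∈ Ioo (0:ℝ) 1, IntervalIntegrable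
          (fun s => ((h s)^2 * s^(n-2) * (ε + s^2))⁻¹ *
            ∫ τ in (0:ℝ)..s, h τ * τ^(n-2) * (ε + τ^2) * (deriv A τ + B τ))
          MeasureTheory.volume 0 r) ∧
      (∀ r ∈ Ioo (0:ℝ) 1,
          ContDiffAt ℝ 2 (vparam n ε h (fun t => deriv A t + B t)) r) ∧
      (∀ r ∈ Ioo (0:ℝ) 1,
          Lop n γ ε (vparam n ε h (fun t => deriv A t + B t)) r = deriv A r + B r) ∧
      (∀ r ∈ Ioo (0:ℝ) 1,
          |vparam n ε h (fun t => deriv A t + B t) r| ≤ C * C0 * r ^ (1 + alphaN n γ)) := by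
  refine ⟨3, by norm_num, fun ε hε C0 hC0 h ⟨hcont, hC2, hLh, h0, _⟩ hmono hbd A B hAc hAd hA'c hBc
    hAb hBb => ?_⟩
  have hpos (r) (hr : r ∈ Ioo (0 : ℝ) 1) : 0 < h r := hr.1.trans_le (hbd r hr).1
  have hh : ContDiffOn ℝ 2 h (Ioo 0 1) := fun r hr => (hC2 r hr).contDiffWithinAt
  have hH : ContinuousOn (fun t => deriv A t + B t) (Ico 0 1) := hA'c.add hBc
  have hbound (s) (hs : s ∈ Ioo (0 : ℝ) 1) :
      |vparamDeriv n ε h (fun t => deriv A t + B t) s| ≤ 3 * C0 :=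
    abs_vparamDeriv_le hε.le hs.1 (hbd s hs).1 <| abs_vparamInner_le hε.le hcont
      (fun x hx => (hC2 x hx).differentiableAt two_ne_zero) hmono h0 hAc hAd hA'c hBc hAb hBb hs
  have hint (r) (hr : r ∈ Ioo (0 : ℝ) 1) :
      IntervalIntegrable (vparamDeriv n ε h (fun t => deriv A t + B t)) volume 0 r :=
    intervalIntegrable_of_continuousOn_Ioo_of_abs_le hr.1.le
      ((contDiffOn_vparamDeriv hε.le hcont (hh.of_le one_le_two) hpos hH).continuousOn.mono
        (Ioo_subset_Ioo_right hr.2.le)) fun s hs => hbound s ⟨hs.1, hs.2.trans hr.2⟩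
  refine ⟨fun s hs => ?_, fun r hr => ?_, fun r hr => ?_, fun r hr => ?_, fun r hr => ?_⟩
  · simpa only [weight, mul_assoc] using
      intervalIntegrable_mul_weight_mul (n := n) (ε := ε) hcont hH (Ioo_subset_Ico_self hs)
  · convert hint r hr using 1
    funext s
    simp only [vparamDeriv, vparamInner, weight, mul_assoc]
  · exact (contDiffOn_vparam hε.le hcont hh hpos hH hint).contDiffAt (Ioo_mem_nhds hr.1 hr.2)
  · exact Lop_vparam hn hε.le hcont hh hpos hH hint (hLh r hr) hr
  · calc _ ≤ 3 * C0 * r * |h r| :=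
          abs_vparam_le hr.1.le fun s hs => hbound s ⟨hs.1, hs.2.trans_lt hr.2⟩
      _ ≤ 3 * C0 * r * r ^ alphaN n γ := by
          rw [abs_of_pos (hpos r hr)]
          exact mul_le_mul_of_nonneg_left (hbd r hr).2 (by have := hr.1; positivity)
      _ = 3 * C0 * r ^ (1 + alphaN n γ) := by rw [Real.rpow_add hr.1, Real.rpow_one]; ring

/-- Step 2 of the proof of Theorem 1.7: the variation-of-parameters formula
produces a solution of `Lg = H` with `|g(r)| ≤ C C₀ r^{1+α}`, with `C = C(n,γ)`
independent of `ε`. -/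
theorem variation_of_parameters (n : ℕ) (hn : 2 ≤ n) (γ : ℝ) (hγ : 1 < γ) :
    ∃ C : ℝ, 0 < C ∧
      ∀ ε : ℝ, 0 < ε → ∀ C0 : ℝ, 0 < C0 →
      ∀ h : ℝ → ℝ, IsODESol n γ ε h → MonotoneOn h (Icc (0:ℝ) 1) →
      (∀ r ∈ Ioo (0:ℝ) 1, r ≤ h r ∧ h r ≤ r ^ alphaN n γ) →
      ∀ A B : ℝ → ℝ,
      ContinuousOn A (Ico (0:ℝ) 1) →
      (∀ r ∈ Ioo (0:ℝ) 1, DifferentiableAt ℝ A r) →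
      ContinuousOn (deriv A) (Ico (0:ℝ) 1) →
      ContinuousOn B (Ico (0:ℝ) 1) →
      (∀ r ∈ Ioo (0:ℝ) 1, |A r| ≤ C0 * r) →
      (∀ r ∈ Ioo (0:ℝ) 1, |B r| ≤ C0) →
      -- well-definedness of the iterated integrals
      (∀ s ∈ Ioo (0:ℝ) 1, IntervalIntegrable
          (fun τ => h τ * τ^(n-2) * (ε + τ^2) * (deriv A τ + B τ)) MeasureTheory.volume 0 s) ∧
      (∀ r ∈ Ioo (0:ℝ) 1, IntervalIntegrable
          (fun s => ((h s)^2 * s^(n-2) * (ε + s^2))⁻¹ *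
            ∫ τ in (0:ℝ)..s, h τ * τ^(n-2) * (ε + τ^2) * (deriv A τ + B τ))
          MeasureTheory.volume 0 r) ∧
      (∀ r ∈ Ioo (0:ℝ) 1,
          ContDiffAt ℝ 2 (vparam n ε h (fun t => deriv A t + B t)) r) ∧
      (∀ r ∈ Ioo (0:ℝ) 1,
          Lop n γ ε (vparam n ε h (fun t => deriv A t + B t)) r = deriv A r + B r) ∧
      (∀ r ∈ Ioo (0:ℝ) 1,
          |vparam n ε h (fun t => deriv A t + B t) r| ≤ C * C0 * r ^ (1 + alphaN n γ)) :=
  variation_of_parameters_general n hn γ
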